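/- For all integers k, ℓ ≥ 1: Σ_{m ∈ ℤ} (−1)^m q_{k+m}^{[k−1]}(x|b) · q_{ℓ−m}^{[ℓ−1]}(x|b) = 0 (a finite sum, since q_j^{[·]} = 0 for j < 0). Equivalently, the two-entry Schur–Pfaffians satisfy Pf[q_k^{[k−1]} q_ℓ^{[ℓ−1]}] + Pf[q_ℓ^{[ℓ−1]} q_k^{[k−1]}] = 0. The identity holds for every number of x-variables. -/

import Mathlib

open Finset

noncomputable section

variable {R : Type*} [CommRing R]

/-- The formal power series `1/(1 - x·u)`. -/
def geomSeries (x : R) : PowerSeries R := PowerSeries.mk fun m => x ^ m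

/-- `e_u^{[k]}(c)`: the power series `∏_{i=1}^k (1 + c_i u)` for `k ≥ 0`, and
`∏_{i=1}^{-k} (1 - c_i u)⁻¹` for `k < 0`.  The sequence `c` is read at indices `1, 2, …`. -/
def eSer (k : ℤ) (c : ℕ → R) : PowerSeries R :=
  if 0 ≤ k then ∏ i ∈ Finset.range k.toNat, (1 + PowerSeries.C (c (i + 1)) * PowerSeries.X)
  else ∏ i ∈ Finset.range (-k).toNat, geomSeries (c (i + 1))

/-- `q_u(x) = ∏_{i=1}^n (1 + x_i u)/(1 - x_i u)`, with `n` x-variables. -/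
def qSer (n : ℕ) (x : ℕ → R) : PowerSeries R :=
  ∏ i ∈ Finset.range n,
    ((1 + PowerSeries.C (x (i + 1)) * PowerSeries.X) * geomSeries (x (i + 1)))

/-- The coefficient of `u^m` (`m : ℤ`) of a power series; zero when `m < 0`. -/
def coeffZ (m : ℤ) (φ : PowerSeries R) : R :=
  if 0 ≤ m then PowerSeries.coeff m.toNat φ else 0

/-- `q_m^{[ℓ]}(x|c)`: the coefficient of `u^m` in `q_u(x)·e_u^{[ℓ]}(c)`. -/
def qC (m ℓ : ℤ) (n : ℕ) (x c : ℕ → R) : R := coeffZ m (qSer n x * eSer ℓ c)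

/-- `q_m^{[k|ℓ]}(x;z|c)`: the coefficient of `u^m` in `q_u(x)·e_u^{[k]}(z)·e_u^{[ℓ]}(c)`. -/
def qC2 (m k ℓ : ℤ) (n : ℕ) (x z c : ℕ → R) : R :=
  coeffZ m (qSer n x * eSer k z * eSer ℓ c)

/-- `e_m^{[k]}(c)`. -/
def eC (m k : ℤ) (c : ℕ → R) : R := coeffZ m (eSer k c)

/-- `e_m^{[k|ℓ]}(z|c)`: the coefficient of `u^m` in `e_u^{[k]}(z)·e_u^{[ℓ]}(c)`. -/
def eC2 (m k ℓ : ℤ) (z c : ℕ → R) : R := coeffZ m (eSer k z * eSer ℓ c)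

/-- Extension of `b` to all integer indices using the convention `b_{-i} = -b_{i+1}` for
`i ≥ 0`; positive indices are untouched.  This also implements the `⋆` substitution. -/
def bext (b : ℤ → R) : ℤ → R := fun j => if 0 < j then b j else -b (1 - j)

/-- `ε(0) = 1` and `ε(m) = 2·(-1)^m` for `m ≥ 1`. -/
def pfEps (m : ℕ) : ℤ := if m = 0 then 1 else 2 * (-1) ^ m

/-- The subscript `α_i + Σ_{j>i} m_{ij} − Σ_{j<i} m_{ji}` in the Schur–Pfaffian. -/
def pfIdx {r : ℕ} (α : Fin r → ℤ) (m : Fin r → Fin r → ℕ) (i : Fin r) : ℤ :=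
  α i + ∑ j, (if i < j then (m i j : ℤ) else 0) - ∑ j, (if j < i then (m j i : ℤ) else 0)

/-- The Schur–Pfaffian `Pf[c^{(1)}_{α_1} ⋯ c^{(r)}_{α_r}]`, as the (finitely supported) sum
over tuples of nonnegative integers `(m_{ij})_{1 ≤ i < j ≤ r}`. -/
def schurPf {r : ℕ} (c : Fin r → ℤ → R) (α : Fin r → ℤ) : R :=
  ∑ᶠ m ∈ {m : Fin r → Fin r → ℕ | ∀ i j, ¬ i < j → m i j = 0},
    (∏ i, ∏ j, if i < j then (pfEps (m i j) : R) else 1) * ∏ i, c i (pfIdx α m i)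

/-- The alphabet of primed, unmarked and circled numbers. -/
inductive MSTEntry where
  | prime : ℕ → MSTEntry
  | unmarked : ℕ → MSTEntry
  | circ : ℕ → MSTEntry
deriving DecidableEq

namespace MSTEntry

/-- Whether an entry is circled (`1`) or not (`0`). -/
def isCirc : MSTEntry → ℕ
  | circ _ => 1
  | _ => 0

/-- Key realizing the order `1' < 1 < 2' < 2 < ⋯` within each class. -/
def key : MSTEntry → ℕ
  | prime k => 2 * k - 1
  | unmarked k => 2 * k
  | circ k => k

/-- The numeric value of an entry. -/
def val : MSTEntry → ℕ
  | prime k => k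
  | unmarked k => k
  | circ k => k

/-- The total order `1' < 1 < 2' < 2 < ⋯ < 1° < 2° < ⋯` on entries of positive value. -/
def le (a b : MSTEntry) : Prop :=
  a.isCirc < b.isCirc ∨ (a.isCirc = b.isCirc ∧ a.key ≤ b.key)

end MSTEntry

/-- The shifted Young diagram of a strict partition `λ` of length `r`:
boxes `(i, j)` with `1 ≤ i ≤ r` and `i ≤ j ≤ λ_i + i - 1` (rows and columns 1-indexed). -/
def shiftedDiag (r : ℕ) (lam : ℕ → ℕ) : Set (ℕ × ℕ) :=
  {p | 1 ≤ p.1 ∧ p.1 ≤ r ∧ p.1 ≤ p.2 ∧ p.2 ≤ lam p.1 + p.1 - 1}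

/-- `T` is a marked shifted tableau of the flagged strict partition `(λ, f)` whose unmarked
and primed entries have numeric value at most `n` (normalized to `unmarked 0` off the
diagram). -/
def IsMST (n r : ℕ) (lam f : ℕ → ℕ) (T : ℕ × ℕ → MSTEntry) : Prop :=
  (∀ p, p ∉ shiftedDiag r lam → T p = .unmarked 0) ∧
  (∀ p ∈ shiftedDiag r lam, 1 ≤ (T p).val) ∧
  (∀ i j j', (i, j) ∈ shiftedDiag r lam → (i, j') ∈ shiftedDiag r lam → j ≤ j' →
    (T (i, j)).le (T (i, j'))) ∧
  (∀ i i' j, (i, j) ∈ shiftedDiag r lam → (i', j) ∈ shiftedDiag r lam → i ≤ i' →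
    (T (i, j)).le (T (i', j))) ∧
  (∀ i i' j k k', (i, j) ∈ shiftedDiag r lam → (i', j) ∈ shiftedDiag r lam → i < i' →
    T (i, j) = .unmarked k → T (i', j) = .unmarked k' → k < k') ∧
  (∀ i j j' k k', (i, j) ∈ shiftedDiag r lam → (i, j') ∈ shiftedDiag r lam → j < j' →
    T (i, j) = .prime k → T (i, j') = .prime k' → k < k') ∧
  (∀ i j j' k k', (i, j) ∈ shiftedDiag r lam → (i, j') ∈ shiftedDiag r lam → j < j' →
    T (i, j) = .circ k → T (i, j') = .circ k' → k < k') ∧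
  (∀ p ∈ shiftedDiag r lam, (T p).le (.circ (f p.1))) ∧
  (∀ p ∈ shiftedDiag r lam, ∀ k, (T p = .unmarked k ∨ T p = .prime k) → k ≤ n)

/-- The factor of the weight `(xz|b)^T` contributed by the entry at box `p`.  The convention
`b_{-i} = -b_{i+1}` is implemented by `bext`. -/
def mstFactor (x z : ℕ → R) (b : ℤ → R) (p : ℕ × ℕ) : MSTEntry → R
  | .unmarked k => x k + bext b ((p.2 : ℤ) - (p.1 : ℤ))
  | .prime k => x k - bext b ((p.2 : ℤ) - (p.1 : ℤ))
  | .circ k => z k + bext b ((k : ℤ) + (p.1 : ℤ) - (p.2 : ℤ))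

/-- The weight `(xz|b)^T` of a marked shifted tableau. -/
def mstWeight (r : ℕ) (lam : ℕ → ℕ) (x z : ℕ → R) (b : ℤ → R) (T : ℕ × ℕ → MSTEntry) : R :=
  ∏ i ∈ Finset.range r, ∏ j ∈ Finset.range (lam (i + 1)),
    mstFactor x z b (i + 1, i + 1 + j) (T (i + 1, i + 1 + j))

/-- The flagged factorial Q-function `Q_{λ,f}(x;z|b)`, with `n` x-variables. -/
def Qflag (n r : ℕ) (lam f : ℕ → ℕ) (x z : ℕ → R) (b : ℤ → R) : R :=
  ∑ᶠ T ∈ {T : ℕ × ℕ → MSTEntry | IsMST n r lam f T}, mstWeight r lam x z b T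

/-- Ivanov's factorial Q-function `Q_λ(x|b)`: the case of the zero flag (no circled
entries, so the z-variables do not occur). -/
def QIvanov (n r : ℕ) (lam : ℕ → ℕ) (x : ℕ → R) (b : ℤ → R) : R :=
  Qflag n r lam (fun _ => 0) x (fun _ => 0) b

/-- The skew Young diagram `κ/ν`: boxes `(i, j)` with `1 ≤ i ≤ r`, `ν_i < j ≤ κ_i`. -/
def skewDiag (r : ℕ) (kap nu : ℕ → ℕ) : Set (ℕ × ℕ) :=
  {p | 1 ≤ p.1 ∧ p.1 ≤ r ∧ nu p.1 < p.2 ∧ p.2 ≤ kap p.1}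

/-- `t` is a row-strict flagged tableau of `(κ/ν, f)` (normalized to `0` off the diagram). -/
def IsRST (r : ℕ) (kap nu f : ℕ → ℕ) (t : ℕ × ℕ → ℕ) : Prop :=
  (∀ p, p ∉ skewDiag r kap nu → t p = 0) ∧
  (∀ p ∈ skewDiag r kap nu, 1 ≤ t p) ∧
  (∀ i j j', (i, j) ∈ skewDiag r kap nu → (i, j') ∈ skewDiag r kap nu → j < j' →
    t (i, j) < t (i, j')) ∧
  (∀ i i' j, (i, j) ∈ skewDiag r kap nu → (i', j) ∈ skewDiag r kap nu → i ≤ i' →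
    t (i, j) ≤ t (i', j)) ∧
  (∀ p ∈ skewDiag r kap nu, t p ≤ f p.1)

/-- The weight `∏_{e ∈ T} (z_{|e|} + b_{|e| + r(e) - c(e)})` of a row-strict flagged tableau. -/
def rstWeight (r : ℕ) (kap nu : ℕ → ℕ) (z : ℕ → R) (b : ℤ → R) (t : ℕ × ℕ → ℕ) : R :=
  ∏ i ∈ Finset.range r, ∏ j ∈ Finset.range (kap (i + 1) - nu (i + 1)),
    (z (t (i + 1, nu (i + 1) + 1 + j)) +
      b ((t (i + 1, nu (i + 1) + 1 + j) : ℤ) + ((i : ℤ) + 1) - ((nu (i + 1) : ℤ) + 1 + (j : ℤ))))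

/-- The row-strict flagged skew factorial Schur polynomial `s̃_{κ/ν,f}(z|b)`. -/
def sTilde (r : ℕ) (kap nu f : ℕ → ℕ) (z : ℕ → R) (b : ℤ → R) : R :=
  ∑ᶠ t ∈ {t : ℕ × ℕ → ℕ | IsRST r kap nu f t}, rstWeight r kap nu z b t


/-! Since `q_u(x) q_{-u}(x) = 1`, the alternating sum is, up to the sign `(-1)^k`, the
coefficient of `u^{k+ℓ}` in
`q_{-u}(x) e_{-u}^{[k-1]}(b) · q_u(x) e_u^{[ℓ-1]}(b) = e_{-u}^{[k-1]}(b) e_u^{[ℓ-1]}(b)`,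
a polynomial in `u` of degree `k + ℓ - 2`. -/

open PowerSeries
open scoped Polynomial

lemma geomSeries_eq_rescale (x : R) : geomSeries x = rescale x (mk 1) := by
  simp [geomSeries, rescale_mk]

lemma geomSeries_mul_one_sub (x : R) : geomSeries x * (1 - C x * X) = 1 := by
  rw [geomSeries_eq_rescale, ← rescale_X, ← map_one (rescale x), ← map_sub, ← map_mul,
    mk_one_mul_one_sub_eq_one, map_one]

lemma rescale_geomSeries (a x : R) : rescale a (geomSeries x) = geomSeries (a * x) := by
  simp [geomSeries, rescale_mk, mul_pow]

lemma rescale_one_add_C_mul_X (a x : R) : rescale a (1 + C x * X) = 1 + C (a * x) * X := by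
  ext n
  rw [coeff_rescale]
  rcases n with _ | _ | n <;> simp [coeff_one]

lemma rescale_neg_one_qSer_mul_qSer (n : ℕ) (x : ℕ → R) :
    rescale (-1) (qSer n x) * qSer n x = 1 := by
  rw [qSer, map_prod, ← prod_mul_distrib]
  refine prod_eq_one fun i _ => ?_
  set y := x (i + 1)
  have hneg : 1 + C (-1 * y) * X = 1 - C y * X := by simp [sub_eq_add_neg]
  have hpos : 1 + C y * X = 1 - C (-1 * y) * X := by simp [sub_eq_add_neg]
  rw [map_mul, rescale_one_add_C_mul_X, rescale_geomSeries, hneg, hpos]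
  calc (1 - C y * X) * geomSeries (-1 * y) * ((1 - C (-1 * y) * X) * geomSeries y)
      = (geomSeries y * (1 - C y * X)) * (geomSeries (-1 * y) * (1 - C (-1 * y) * X)) := by
        ring
    _ = 1 := by rw [geomSeries_mul_one_sub, geomSeries_mul_one_sub, one_mul]

lemma rescale_eSer_natCast (a : R) (m : ℕ) (c : ℕ → R) :
    rescale a (eSer m c) = eSer m (fun i => a * c i) := by
  simp only [eSer, Nat.cast_nonneg, if_true, Int.toNat_natCast, map_prod,
    rescale_one_add_C_mul_X]

lemma eSer_natCast_eq_coe (m : ℕ) (c : ℕ → R) :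
    eSer m c =
      ((∏ i ∈ range m, (1 + Polynomial.C (c (i + 1)) * Polynomial.X) : R[X]) : R⟦X⟧) := by
  rw [eSer, if_pos m.cast_nonneg, Int.toNat_natCast, ← Polynomial.coeToPowerSeries.ringHom_apply,
    map_prod]
  simp [Polynomial.coeToPowerSeries.ringHom_apply]

lemma coeff_eSer_mul_eSer_eq_zero {m m' j : ℕ} (h : m + m' < j) (c c' : ℕ → R) :
    coeff j (eSer m c * eSer m' c') = 0 := by
  have hdeg (m : ℕ) (c : ℕ → R) :
      (∏ i ∈ range m, (1 + Polynomial.C (c (i + 1)) * Polynomial.X)).natDegree ≤ m := by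
    refine (Polynomial.natDegree_prod_le _ _).trans ?_
    refine (sum_le_sum fun i (_ : i ∈ range m) =>
      (by compute_degree : (1 + Polynomial.C (c (i + 1)) * Polynomial.X).natDegree ≤ 1)).trans ?_
    simp
  rw [eSer_natCast_eq_coe, eSer_natCast_eq_coe, ← Polynomial.coe_mul, Polynomial.coeff_coe]
  exact Polynomial.coeff_eq_zero_of_natDegree_lt <|
    (Polynomial.natDegree_mul_le.trans (add_le_add (hdeg m c) (hdeg m' c'))).trans_lt h

lemma support_coeffZ_mul_coeffZ_subset (F G : R⟦X⟧) (N : ℤ) :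
    Function.support (fun j => coeffZ j F * coeffZ (N - j) G) ⊆ Set.Icc 0 N := by
  intro j hj
  rw [Function.mem_support] at hj
  constructor <;> by_contra h <;> apply hj
  · rw [coeffZ, if_neg h, zero_mul]
  · rw [show coeffZ (N - j) G = 0 from if_neg (by omega), mul_zero]

lemma finsum_coeffZ_mul_coeffZ (F G : R⟦X⟧) (N : ℤ) :
    ∑ᶠ j, coeffZ j F * coeffZ (N - j) G = coeffZ N (F * G) := by
  rw [finsum_eq_sum_of_support_subset _ (s := Finset.Icc 0 N)
    (by simpa using support_coeffZ_mul_coeffZ_subset F G N)]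
  rcases lt_or_ge N 0 with hN | hN
  · rw [Finset.Icc_eq_empty_of_lt hN, sum_empty, coeffZ, if_neg hN.not_ge]
  lift N to ℕ using hN
  rw [coeffZ, if_pos N.cast_nonneg, Int.toNat_natCast, coeff_mul,
    Finset.Nat.sum_antidiagonal_eq_sum_range_succ_mk]
  refine sum_nbij' Int.toNat (↑) ?_ ?_ ?_ ?_ ?_
  all_goals intro j hj; simp only [Finset.mem_Icc, mem_range] at hj ⊢
  any_goals omega
  rw [coeffZ, coeffZ, if_pos hj.1, if_pos (by omega)]
  congr 3; omega

lemma coeffZ_rescale_neg_one (F : R⟦X⟧) (j : ℤ) :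
    coeffZ j (rescale (-1) F) = (j.negOnePow : R) * coeffZ j F := by
  rcases lt_or_ge j 0 with hj | hj
  · simp [coeffZ, hj.not_ge]
  lift j to ℕ using hj
  simp [coeffZ, coeff_rescale]

lemma finsum_negOnePow_mul_coeffZ_mul_coeffZ (F G : R⟦X⟧) (k l : ℤ) :
    ∑ᶠ m, (m.negOnePow : R) * (coeffZ (k + m) F * coeffZ (l - m) G) =
      (k.negOnePow : R) * coeffZ (k + l) (rescale (-1) F * G) := by
  have hfin := (Set.finite_Icc 0 (k + l)).subset
    (support_coeffZ_mul_coeffZ_subset (rescale (-1) F) G _)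
  rw [← finsum_coeffZ_mul_coeffZ, mul_finsum' _ _ hfin, ← finsum_comp_equiv (Equiv.subRight k)]
  refine finsum_congr fun m => ?_
  rw [Equiv.subRight_apply, coeffZ_rescale_neg_one, Int.negOnePow_sub, add_sub_cancel,
    show l - (m - k) = k + l - m by ring]
  push_cast
  ring

/-- For all integers `k, ℓ ≥ 1`:
`Σ_{m ∈ ℤ} (−1)^m q_{k+m}^{[k−1]}(x|b) · q_{ℓ−m}^{[ℓ−1]}(x|b) = 0`
(a finite sum), for every number `n` of x-variables. -/
theorem statement_9 (R : Type*) [CommRing R] (n : ℕ) (x b : ℕ → R)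
    (k l : ℤ) (hk : 1 ≤ k) (hl : 1 ≤ l) :
    ∑ᶠ m : ℤ,
        ((m.negOnePow : ℤ) : R) * (qC (k + m) (k - 1) n x b * qC (l - m) (l - 1) n x b) =
      0 := by
  obtain ⟨K, hK⟩ := Int.eq_ofNat_of_zero_le (by omega : 0 ≤ k - 1)
  obtain ⟨L, hL⟩ := Int.eq_ofNat_of_zero_le (by omega : 0 ≤ l - 1)
  have hprod : rescale (-1) (qSer n x * eSer (k - 1) b) * (qSer n x * eSer (l - 1) b) =
      eSer K (fun i => -1 * b i) * eSer L b := by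
    rw [hK, hL, map_mul, rescale_eSer_natCast]
    linear_combination eSer K (fun i => -1 * b i) * eSer L b * rescale_neg_one_qSer_mul_qSer n x
  simp only [qC]
  rw [finsum_negOnePow_mul_coeffZ_mul_coeffZ, hprod, coeffZ, if_pos (by omega),
    coeff_eSer_mul_eSer_eq_zero (by omega), mul_zero]
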